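/- Let d ≥ 3 and let λ = 4k for some integer 1 ≤ k ≤ d-1. Let f : ℝ^d → ℂ be a ℤ^d-periodic continuously differentiable function such that f(ξ) = 0 for every ξ with h₀(ξ) = λ. Then ∫_{[-1/2,1/2]^d} |f(ξ)|² / (h₀(ξ) - λ)² dξ < ∞; i.e. (h₀ - λ)^{-1} f ∈ L² of the torus. -/

import Mathlib

/-!
Write `h0sym ξ - 4k = 4F` with `F = ∑ sin² (π ξ_j) - k`, put `m = minSinCosSq`, so that
`m(θ) ≳ dist(θ, {0, ±1/2})²`, and let `M = max_j m(ξ_j)`. The level set `{h0sym = 4k}`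
contains a point `z` with `‖ξ - z‖² M ≲ d² F²`: if `|F| ≤ M`, move only the best coordinate,
along which `sin² (π ·)` has slope `≳ √M` (from `sin² a - sin² b = sin (a + b) sin (a - b)`);
if `M < |F| < 1/(d+1)`, round every coordinate to a nearest critical point `0, ±1/2`; otherwise
any point of the level set will do. As `f` is Lipschitz on the cube and vanishes on the level
set, `|f ξ|² / (h0sym ξ - 4k)² ≲ 1/M ≤ ∏_{j ∈ S} m(ξ_j)^(-1/3)` for any three coordinates `S`,
and `m^(-1/3)` is integrable in one variable since its singularities are `|θ - c|^(-2/3)`.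
-/

open MeasureTheory

/-- The symbol `h₀(ξ) = 4 ∑_j sin²(π ξ_j)`, as a `ℤ^d`-periodic function on `ℝ^d`. -/
noncomputable def h0sym {d : ℕ} (ξ : Fin d → ℝ) : ℝ :=
  4 * ∑ j, Real.sin (Real.pi * ξ j) ^ 2

open Real Set

noncomputable def minSinCosSq (θ : ℝ) : ℝ := min (sin (π * θ) ^ 2) (cos (π * θ) ^ 2)

noncomputable def sinSqCrit : Finset ℝ := {0, 1 / 2, -(1 / 2)}

noncomputable def critWeight (θ : ℝ) : ℝ := ∑ c ∈ sinSqCrit, ((θ - c) ^ 2) ^ (-(1 / 3 : ℝ))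

lemma sin_sq_sub_sin_sq (x y : ℝ) : sin x ^ 2 - sin y ^ 2 = sin (x + y) * sin (x - y) := by
  rw [sin_add, sin_sub]
  linear_combination sin y ^ 2 * sin_sq_add_cos_sq x - sin x ^ 2 * sin_sq_add_cos_sq y

lemma two_mul_le_sin_pi_mul {θ : ℝ} (h0 : 0 ≤ θ) (h1 : θ ≤ 1 / 2) : 2 * θ ≤ sin (π * θ) := by
  have hπ := pi_pos
  calc 2 * θ = 2 / π * (π * θ) := by field_simp
    _ ≤ sin (π * θ) := mul_le_sin (by positivity) (by nlinarith)

lemma four_mul_sq_le_sin_pi_mul_sq {θ : ℝ} (h : |θ| ≤ 1 / 2) : 4 * θ ^ 2 ≤ sin (π * θ) ^ 2 := by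
  have hsq : sin (π * |θ|) ^ 2 = sin (π * θ) ^ 2 := by
    rcases abs_cases θ with ⟨hθ, -⟩ | ⟨hθ, -⟩ <;> simp [hθ]
  rw [← hsq, show 4 * θ ^ 2 = (2 * |θ|) ^ 2 by rw [mul_pow, sq_abs]; norm_num]
  exact pow_le_pow_left₀ (by positivity) (two_mul_le_sin_pi_mul (abs_nonneg θ) h) 2

lemma four_mul_sq_le_cos_pi_mul_sq {θ : ℝ} (h : |θ| ≤ 1 / 2) :
    4 * (1 / 2 - |θ|) ^ 2 ≤ cos (π * θ) ^ 2 := by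
  have hcos : cos (π * θ) = sin (π * (1 / 2 - |θ|)) := by
    rw [show π * (1 / 2 - |θ|) = π / 2 - |π * θ| by rw [abs_mul, abs_of_pos pi_pos]; ring,
      sin_pi_div_two_sub, cos_abs]
  rw [hcos]
  exact four_mul_sq_le_sin_pi_mul_sq
    (abs_le.2 ⟨by linarith [abs_nonneg θ], by linarith [abs_nonneg θ]⟩)

lemma exists_sin_pi_mul_sq_eq {v : ℝ} (h0 : 0 ≤ v) (h1 : v ≤ 1) :
    ∃ θ ∈ Icc (0 : ℝ) (1 / 2), sin (π * θ) ^ 2 = v :=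
  intermediate_value_Icc (by norm_num) (by fun_prop)
    ⟨by simpa using h0, by rwa [mul_one_div, sin_pi_div_two, one_pow]⟩

lemma minSinCosSq_nonneg (θ : ℝ) : 0 ≤ minSinCosSq θ := le_min (sq_nonneg _) (sq_nonneg _)

lemma minSinCosSq_le_sin_sq (θ : ℝ) : minSinCosSq θ ≤ sin (π * θ) ^ 2 := min_le_left _ _

lemma minSinCosSq_le_one_sub_sin_sq (θ : ℝ) : minSinCosSq θ ≤ 1 - sin (π * θ) ^ 2 :=
  (min_le_right _ _).trans_eq (cos_sq' _)

lemma minSinCosSq_neg (θ : ℝ) : minSinCosSq (-θ) = minSinCosSq θ := by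
  simp [minSinCosSq]

lemma abs_le_half_of_mem_sinSqCrit {c : ℝ} (hc : c ∈ sinSqCrit) : |c| ≤ 1 / 2 := by
  simp only [sinSqCrit, Finset.mem_insert, Finset.mem_singleton] at hc
  rcases hc with rfl | rfl | rfl <;> norm_num [abs_of_pos]

lemma sin_pi_mul_sq_eq_zero_or_one_of_mem_sinSqCrit {c : ℝ} (hc : c ∈ sinSqCrit) :
    sin (π * c) ^ 2 = 0 ∨ sin (π * c) ^ 2 = 1 := by
  simp only [sinSqCrit, Finset.mem_insert, Finset.mem_singleton] at hc
  rcases hc with rfl | rfl | rfl <;> norm_num [show π * (1 / 2) = π / 2 by ring]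

lemma exists_mem_sinSqCrit_near {θ : ℝ} (h : |θ| ≤ 1 / 2) :
    ∃ c ∈ sinSqCrit, |sin (π * θ) ^ 2 - sin (π * c) ^ 2| ≤ minSinCosSq θ ∧
      4 * (θ - c) ^ 2 ≤ minSinCosSq θ := by
  rcases le_total (sin (π * θ) ^ 2) (cos (π * θ) ^ 2) with hle | hle
  · refine ⟨0, by simp [sinSqCrit], ?_⟩
    rw [minSinCosSq, min_eq_left hle]
    simpa using four_mul_sq_le_sin_pi_mul_sq h
  · obtain ⟨c, hc, hc1, hcθ⟩ : ∃ c ∈ sinSqCrit, sin (π * c) ^ 2 = 1 ∧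
        (θ - c) ^ 2 = (1 / 2 - |θ|) ^ 2 := by
      rcases abs_cases θ with ⟨hθ, -⟩ | ⟨hθ, -⟩
      · exact ⟨1 / 2, by simp [sinSqCrit], by rw [mul_one_div, sin_pi_div_two, one_pow],
          by rw [hθ]; ring⟩
      · exact ⟨-(1 / 2), by simp [sinSqCrit], by rw [mul_neg, sin_neg, neg_sq, mul_one_div,
          sin_pi_div_two, one_pow], by rw [hθ]; ring⟩
    refine ⟨c, hc, ?_, ?_⟩ <;> rw [minSinCosSq, min_eq_right hle]
    · rw [hc1, abs_sub_comm, abs_of_nonneg (by linarith [sin_sq_le_one (π * θ)]), cos_sq']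
    · rw [hcθ]
      exact four_mul_sq_le_cos_pi_mul_sq h

lemma minSinCosSq_pos {θ : ℝ} (h : |θ| ≤ 1 / 2) (hθ : θ ∉ sinSqCrit) : 0 < minSinCosSq θ := by
  obtain ⟨c, hc, -, hle⟩ := exists_mem_sinSqCrit_near h
  have : θ - c ≠ 0 := sub_ne_zero.2 fun h => hθ (h ▸ hc)
  exact lt_of_lt_of_le (by positivity) hle

lemma minSinCosSq_rpow_le_critWeight {θ : ℝ} (h : |θ| ≤ 1 / 2) (hθ : θ ∉ sinSqCrit) :
    minSinCosSq θ ^ (-(1 / 3 : ℝ)) ≤ critWeight θ := by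
  obtain ⟨c, hc, -, hle⟩ := exists_mem_sinSqCrit_near h
  have : θ - c ≠ 0 := sub_ne_zero.2 fun h => hθ (h ▸ hc)
  calc minSinCosSq θ ^ (-(1 / 3 : ℝ)) ≤ ((θ - c) ^ 2) ^ (-(1 / 3 : ℝ)) :=
        rpow_le_rpow_of_nonpos (by positivity) (by nlinarith [sq_nonneg (θ - c)]) (by norm_num)
    _ ≤ critWeight θ :=
        Finset.single_le_sum (f := fun c => ((θ - c) ^ 2) ^ (-(1 / 3 : ℝ)))
          (fun c _ => rpow_nonneg (sq_nonneg _) _) hc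

lemma minSinCosSq_le_sin_sq_add {θ θ' : ℝ} (hθ : θ ∈ Icc (0 : ℝ) (1 / 2))
    (hθ' : θ' ∈ Icc (0 : ℝ) (1 / 2)) : minSinCosSq θ ≤ sin (π * (θ + θ')) ^ 2 := by
  obtain ⟨h0, h1⟩ := hθ
  obtain ⟨h0', h1'⟩ := hθ'
  have hπ := pi_pos
  rcases le_total (θ + θ') (1 / 2) with hs | hs
  · calc minSinCosSq θ ≤ sin (π * θ) ^ 2 := minSinCosSq_le_sin_sq θ
      _ ≤ sin (π * (θ + θ')) ^ 2 :=
          pow_le_pow_left₀ (sin_nonneg_of_nonneg_of_le_pi (by positivity) (by nlinarith))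
            (sin_le_sin_of_le_of_le_pi_div_two (by nlinarith) (by nlinarith) (by nlinarith)) 2
  · calc minSinCosSq θ ≤ cos (π * θ) ^ 2 := min_le_right _ _
      _ = sin (π * (1 / 2 - θ)) ^ 2 := by rw [← sin_pi_div_two_sub]; ring_nf
      _ ≤ sin (π * (1 - (θ + θ'))) ^ 2 :=
          pow_le_pow_left₀ (sin_nonneg_of_nonneg_of_le_pi (by nlinarith) (by nlinarith))
            (sin_le_sin_of_le_of_le_pi_div_two (by nlinarith) (by nlinarith) (by nlinarith)) 2
      _ = sin (π * (θ + θ')) ^ 2 := by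
          rw [show π * (1 - (θ + θ')) = π - π * (θ + θ') by ring, sin_pi_sub]

lemma four_mul_sq_mul_minSinCosSq_le {θ θ' : ℝ} (hθ : θ ∈ Icc (0 : ℝ) (1 / 2))
    (hθ' : θ' ∈ Icc (0 : ℝ) (1 / 2)) :
    4 * (θ - θ') ^ 2 * minSinCosSq θ ≤ (sin (π * θ) ^ 2 - sin (π * θ') ^ 2) ^ 2 := by
  have hdiff : |θ - θ'| ≤ 1 / 2 := by
    rw [abs_sub_le_iff]
    constructor <;> linarith [hθ.1, hθ.2, hθ'.1, hθ'.2]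
  rw [sin_sq_sub_sin_sq, ← mul_add, ← mul_sub, mul_pow, mul_comm (sin _ ^ 2)]
  exact mul_le_mul (four_mul_sq_le_sin_pi_mul_sq hdiff) (minSinCosSq_le_sin_sq_add hθ hθ')
    (minSinCosSq_nonneg θ) (sq_nonneg _)

lemma exists_near_sin_pi_mul_sq_eq {θ v : ℝ} (hθ : |θ| ≤ 1 / 2) (hv0 : 0 ≤ v) (hv1 : v ≤ 1) :
    ∃ θ', |θ'| ≤ 1 / 2 ∧ sin (π * θ') ^ 2 = v ∧
      4 * (θ - θ') ^ 2 * minSinCosSq θ ≤ (sin (π * θ) ^ 2 - v) ^ 2 := by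
  obtain ⟨t, ht, htv⟩ := exists_sin_pi_mul_sq_eq hv0 hv1
  have ht' : |t| ≤ 1 / 2 := abs_le.2 ⟨by linarith [ht.1], ht.2⟩
  obtain ⟨hθl, hθr⟩ := abs_le.1 hθ
  rcases le_total 0 θ with h | h
  · exact ⟨t, ht', htv, htv ▸ four_mul_sq_mul_minSinCosSq_le ⟨h, hθr⟩ ht⟩
  · have key := four_mul_sq_mul_minSinCosSq_le ⟨neg_nonneg.2 h, by linarith⟩ ht
    refine ⟨-t, by rwa [abs_neg], by simpa using htv, ?_⟩
    rw [minSinCosSq_neg, htv, mul_neg, sin_neg, neg_sq] at key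
    linarith [show (θ - -t) ^ 2 = (-θ - t) ^ 2 by ring]

section LevelSet

lemma mem_Icc_const_iff_abs_le {ι : Type*} {ξ : ι → ℝ} {a : ℝ} :
    ξ ∈ Icc (fun _ => -a) (fun _ => a) ↔ ∀ j, |ξ j| ≤ a := by
  simp only [mem_Icc, Pi.le_def, abs_le, forall_and]

lemma sq_norm_le_of_forall_sq_le {ι : Type*} [Fintype ι] {x : ι → ℝ} {r : ℝ} (hr : 0 ≤ r)
    (h : ∀ j, x j ^ 2 ≤ r) : ‖x‖ ^ 2 ≤ r := by
  have hx : ‖x‖ ≤ √r :=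
    (pi_norm_le_iff_of_nonneg (sqrt_nonneg r)).2 fun j =>
      (norm_eq_abs _).trans_le (abs_le_sqrt (h j))
  calc ‖x‖ ^ 2 ≤ √r ^ 2 := pow_le_pow_left₀ (norm_nonneg _) hx 2
    _ = r := sq_sqrt hr

lemma exists_nat_eq_sum_of_eq_zero_or_one {ι : Type*} (s : Finset ι) {x : ι → ℝ}
    (hx : ∀ j, x j = 0 ∨ x j = 1) : ∃ m : ℕ, ∑ j ∈ s, x j = m := by
  classical
  refine ⟨(s.filter (x · = 1)).card, ?_⟩
  rw [← Finset.sum_boole]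
  exact Finset.sum_congr rfl fun j _ => by rcases hx j with h | h <;> simp [h]

variable {d k : ℕ} {ξ : Fin d → ℝ}

lemma exists_h0sym_eq (hk : k ≤ d) : ∃ z : Fin d → ℝ, (∀ j, |z j| ≤ 1 / 2) ∧ h0sym z = 4 * k := by
  rcases Nat.eq_zero_or_pos d with rfl | hd
  · exact ⟨0, fun j => j.elim0, by simp [h0sym, Nat.le_zero.1 hk]⟩
  obtain ⟨t, ht, htv⟩ := exists_sin_pi_mul_sq_eq (v := k / d) (by positivity)
    (div_le_one_of_le₀ (by exact_mod_cast hk) (by positivity))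
  refine ⟨fun _ => t, fun _ => abs_le.2 ⟨by linarith [ht.1], ht.2⟩, ?_⟩
  simp only [h0sym, htv, Finset.sum_const, Finset.card_univ, Fintype.card_fin, nsmul_eq_mul]
  field_simp

/-- Round every coordinate to a nearest critical point of `sin² (π ·)`; the rounded point has an
integer `∑ sin²`, which `hsmall` forces to be `k`. -/
lemma exists_h0sym_eq_of_round (hξ : ∀ j, |ξ j| ≤ 1 / 2) {i : Fin d}
    (hi : ∀ j, minSinCosSq (ξ j) ≤ minSinCosSq (ξ i))
    (hsmall : d * minSinCosSq (ξ i) + |∑ j, sin (π * ξ j) ^ 2 - k| < 1) :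
    ∃ z : Fin d → ℝ, (∀ j, |z j| ≤ 1 / 2) ∧ h0sym z = 4 * k ∧
      4 * ‖ξ - z‖ ^ 2 ≤ minSinCosSq (ξ i) := by
  set M := minSinCosSq (ξ i)
  choose z hz hzs hzξ using fun j => exists_mem_sinSqCrit_near (hξ j)
  obtain ⟨m, hm⟩ := exists_nat_eq_sum_of_eq_zero_or_one Finset.univ
    fun j => sin_pi_mul_sq_eq_zero_or_one_of_mem_sinSqCrit (hz j)
  have hround : |∑ j, sin (π * ξ j) ^ 2 - m| ≤ d * M :=
    calc |∑ j, sin (π * ξ j) ^ 2 - m| = |∑ j, (sin (π * ξ j) ^ 2 - sin (π * z j) ^ 2)| := by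
          rw [Finset.sum_sub_distrib, hm]
      _ ≤ ∑ j, |sin (π * ξ j) ^ 2 - sin (π * z j) ^ 2| := Finset.abs_sum_le_sum_abs _ _
      _ ≤ ∑ _j : Fin d, M := Finset.sum_le_sum fun j _ => (hzs j).trans (hi j)
      _ = d * M := by simp
  have hmk : m = k := by
    have h : |(m : ℝ) - k| < 1 :=
      calc |(m : ℝ) - k| ≤ |(m : ℝ) - ∑ j, sin (π * ξ j) ^ 2| + |∑ j, sin (π * ξ j) ^ 2 - k| :=
            abs_sub_le _ _ _
        _ < 1 := by rw [abs_sub_comm]; linarith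
    obtain ⟨h1, h2⟩ := abs_lt.1 h
    have : m < k + 1 := by exact_mod_cast (by linarith : (m : ℝ) < k + 1)
    have : k < m + 1 := by exact_mod_cast (by linarith : (k : ℝ) < m + 1)
    omega
  refine ⟨z, fun j => abs_le_half_of_mem_sinSqCrit (hz j), by rw [h0sym, hm, hmk], ?_⟩
  have := sq_norm_le_of_forall_sq_le (x := ξ - z) (r := M / 4)
    (div_nonneg (minSinCosSq_nonneg _) zero_le_four)
    fun j => by rw [Pi.sub_apply]; linarith [hzξ j, hi j]
  linarith

lemma exists_h0sym_eq_of_update (hξ : ∀ j, |ξ j| ≤ 1 / 2) (i : Fin d)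
    (hF : |∑ j, sin (π * ξ j) ^ 2 - k| ≤ minSinCosSq (ξ i)) :
    ∃ z : Fin d → ℝ, (∀ j, |z j| ≤ 1 / 2) ∧ h0sym z = 4 * k ∧
      4 * ‖ξ - z‖ ^ 2 * minSinCosSq (ξ i) ≤ (∑ j, sin (π * ξ j) ^ 2 - k) ^ 2 := by
  set F := ∑ j, sin (π * ξ j) ^ 2 - k
  obtain ⟨hF1, hF2⟩ := abs_le.1 hF
  obtain ⟨t, ht, htv, hclose⟩ := exists_near_sin_pi_mul_sq_eq (hξ i)
    (v := sin (π * ξ i) ^ 2 - F) (by linarith [minSinCosSq_le_sin_sq (ξ i)])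
    (by linarith [minSinCosSq_le_one_sub_sin_sq (ξ i)])
  refine ⟨Function.update ξ i t, fun j => ?_, ?_, ?_⟩
  · rcases eq_or_ne j i with rfl | hj
    · rwa [Function.update_self]
    · rw [Function.update_of_ne hj]; exact hξ j
  · have hsum : ∑ j, sin (π * Function.update ξ i t j) ^ 2 - ∑ j, sin (π * ξ j) ^ 2 =
        sin (π * t) ^ 2 - sin (π * ξ i) ^ 2 := by
      rw [← Finset.sum_sub_distrib, Finset.sum_eq_single i (fun j _ hj => by simp [hj]) (by simp)]
      simp
    rw [h0sym]
    linarith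
  · have hnorm := sq_norm_le_of_forall_sq_le (x := ξ - Function.update ξ i t) (sq_nonneg (ξ i - t))
      fun j => by
        rcases eq_or_ne j i with rfl | hj
        · simp
        · simp [hj, sq_nonneg]
    calc 4 * ‖ξ - Function.update ξ i t‖ ^ 2 * minSinCosSq (ξ i)
        ≤ 4 * (ξ i - t) ^ 2 * minSinCosSq (ξ i) := by gcongr; exact minSinCosSq_nonneg _
      _ ≤ F ^ 2 := by simpa using hclose

lemma exists_h0sym_eq_near (hk : k ≤ d) (hξ : ∀ j, |ξ j| ≤ 1 / 2) {i : Fin d}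
    (hi : ∀ j, minSinCosSq (ξ j) ≤ minSinCosSq (ξ i)) :
    ∃ z : Fin d → ℝ, (∀ j, |z j| ≤ 1 / 2) ∧ h0sym z = 4 * k ∧
      16 * ‖ξ - z‖ ^ 2 * minSinCosSq (ξ i) ≤ ((d + 1) * (h0sym ξ - 4 * k)) ^ 2 := by
  set F := ∑ j, sin (π * ξ j) ^ 2 - k
  set M := minSinCosSq (ξ i)
  have hh0 : h0sym ξ - 4 * k = 4 * F := by rw [h0sym]; ring
  have hM0 : 0 ≤ M := minSinCosSq_nonneg _
  have hF : F ^ 2 ≤ ((d + 1) * F) ^ 2 := by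
    rw [mul_pow]; exact le_mul_of_one_le_left (sq_nonneg F) (by nlinarith [d.cast_nonneg (α := ℝ)])
  rw [hh0]
  by_cases hlarge : 1 ≤ (d + 1) * |F|
  · obtain ⟨z, hz, hzk⟩ := exists_h0sym_eq hk
    refine ⟨z, hz, hzk, ?_⟩
    have hnorm : ‖ξ - z‖ ^ 2 ≤ 1 := sq_norm_le_of_forall_sq_le zero_le_one fun j => by
      rw [Pi.sub_apply, sq_le_one_iff_abs_le_one]
      linarith [abs_sub (ξ j) (z j), hξ j, hz j]
    have hM1 : M ≤ 1 := (minSinCosSq_le_sin_sq _).trans (sin_sq_le_one _)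
    have : 1 ≤ ((d + 1) * F) ^ 2 := by
      rw [← sq_abs, abs_mul, abs_of_nonneg (by positivity : (0 : ℝ) ≤ d + 1)]
      nlinarith
    nlinarith [mul_le_mul hnorm hM1 hM0 zero_le_one]
  by_cases hMF : M < |F|
  · obtain ⟨z, hz, hzk, hzξ⟩ := exists_h0sym_eq_of_round (k := k) hξ hi (by nlinarith)
    refine ⟨z, hz, hzk, ?_⟩
    nlinarith [sq_abs F, abs_nonneg F]
  · obtain ⟨z, hz, hzk, hzξ⟩ := exists_h0sym_eq_of_update (k := k) hξ i (not_lt.1 hMF)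
    exact ⟨z, hz, hzk, by nlinarith⟩

lemma norm_sq_div_sq_le {E : Type*} [SeminormedAddCommGroup E] (hk : k ≤ d)
    {f : (Fin d → ℝ) → E} {L : NNReal}
    (hf : LipschitzOnWith L f (Icc (fun _ => -(1 / 2)) (fun _ => 1 / 2)))
    (hvanish : ∀ z, h0sym z = 4 * k → f z = 0) (hξ : ∀ j, |ξ j| ≤ 1 / 2) {i : Fin d}
    (hi : ∀ j, minSinCosSq (ξ j) ≤ minSinCosSq (ξ i)) (hM : 0 < minSinCosSq (ξ i)) :
    ‖f ξ‖ ^ 2 / (h0sym ξ - 4 * k) ^ 2 ≤ (L * (d + 1) / 4) ^ 2 / minSinCosSq (ξ i) := by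
  by_cases h0 : h0sym ξ - 4 * k = 0
  · rw [h0, zero_pow two_ne_zero, div_zero]
    positivity
  obtain ⟨z, hz, hzk, hzξ⟩ := exists_h0sym_eq_near hk hξ hi
  have hfξ : ‖f ξ‖ ≤ L * ‖ξ - z‖ := by
    simpa [hvanish z hzk, dist_eq_norm] using
      hf.dist_le_mul ξ (mem_Icc_const_iff_abs_le.2 hξ) z (mem_Icc_const_iff_abs_le.2 hz)
  rw [div_le_div_iff₀ (by positivity) hM]
  calc ‖f ξ‖ ^ 2 * minSinCosSq (ξ i) ≤ (L * ‖ξ - z‖) ^ 2 * minSinCosSq (ξ i) := by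
        gcongr
    _ = L ^ 2 / 16 * (16 * ‖ξ - z‖ ^ 2 * minSinCosSq (ξ i)) := by ring
    _ ≤ L ^ 2 / 16 * ((d + 1) * (h0sym ξ - 4 * k)) ^ 2 := by gcongr
    _ = (L * (d + 1) / 4) ^ 2 * (h0sym ξ - 4 * k) ^ 2 := by ring

lemma inv_le_prod_rpow_neg_inv_card {ι : Type*} {S : Finset ι} {n : ℕ} (hS : S.card = n)
    (hn : n ≠ 0) {m : ι → ℝ} {M : ℝ} (hm : ∀ j ∈ S, 0 < m j) (hmM : ∀ j ∈ S, m j ≤ M) :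
    M⁻¹ ≤ ∏ j ∈ S, m j ^ (-(n : ℝ)⁻¹) := by
  obtain ⟨j, hj⟩ : S.Nonempty := Finset.card_ne_zero.1 (hS ▸ hn)
  have hM : 0 < M := (hm j hj).trans_le (hmM j hj)
  calc M⁻¹ = ∏ _j ∈ S, M ^ (-(n : ℝ)⁻¹) := by
        rw [Finset.prod_const, hS, ← rpow_natCast, ← rpow_mul hM.le, neg_mul,
          inv_mul_cancel₀ (by exact_mod_cast hn), rpow_neg_one]
    _ ≤ ∏ j ∈ S, m j ^ (-(n : ℝ)⁻¹) :=
        Finset.prod_le_prod (fun _ _ => rpow_nonneg hM.le _) fun j hj =>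
          rpow_le_rpow_of_nonpos (hm j hj) (hmM j hj) (by simp)

lemma inv_le_prod_critWeight {ι : Type*} {S : Finset ι} (hS : S.card = 3) {x : ι → ℝ}
    (hx : ∀ j, |x j| ≤ 1 / 2) (hcrit : ∀ j, x j ∉ sinSqCrit) {M : ℝ}
    (hM : ∀ j, minSinCosSq (x j) ≤ M) : M⁻¹ ≤ ∏ j ∈ S, critWeight (x j) :=
  calc M⁻¹ ≤ ∏ j ∈ S, minSinCosSq (x j) ^ (-((3 : ℕ) : ℝ)⁻¹) :=
        inv_le_prod_rpow_neg_inv_card hS three_ne_zero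
          (fun j _ => minSinCosSq_pos (hx j) (hcrit j)) fun j _ => hM j
    _ ≤ ∏ j ∈ S, critWeight (x j) :=
        Finset.prod_le_prod (fun j _ => rpow_nonneg (minSinCosSq_nonneg _) _) fun j _ => by
          rw [show -((3 : ℕ) : ℝ)⁻¹ = -(1 / 3) by norm_num]
          exact minSinCosSq_rpow_le_critWeight (hx j) (hcrit j)

end LevelSet

lemma intervalIntegrable_sq_rpow {r : ℝ} (hr : -1 < 2 * r) (a b : ℝ) :
    IntervalIntegrable (fun x : ℝ => (x ^ 2) ^ r) volume a b := by
  have hpos : ∀ c, 0 ≤ c → IntervalIntegrable (fun x : ℝ => (x ^ 2) ^ r) volume 0 c := by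
    intro c hc
    have hbase := intervalIntegral.intervalIntegrable_rpow' (a := 0) (b := c) hr
    rw [intervalIntegrable_iff, uIoc_of_le hc] at hbase ⊢
    refine hbase.congr_fun (fun x hx => ?_) measurableSet_Ioc
    rw [← rpow_natCast, ← rpow_mul hx.1.le, Nat.cast_ofNat]
  have hall : ∀ c, IntervalIntegrable (fun x : ℝ => (x ^ 2) ^ r) volume 0 c := by
    intro c
    rcases le_total 0 c with hc | hc
    · exact hpos c hc
    · have h := hpos (-c) (by linarith)
      rw [IntervalIntegrable.iff_comp_neg] at h
      simpa using h
  exact (hall a).symm.trans (hall b)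

lemma integrableOn_critWeight : IntegrableOn critWeight (Icc (-(1 / 2)) (1 / 2)) := by
  rw [← intervalIntegrable_iff_integrableOn_Icc_of_le (by norm_num)]
  have := IntervalIntegrable.sum (μ := volume) (a := -(1 / 2)) (b := 1 / 2) sinSqCrit
    (f := fun c x => ((x - c) ^ 2) ^ (-(1 / 3 : ℝ))) fun c _ => by
      simpa using
        (intervalIntegrable_sq_rpow (by norm_num) (-(1 / 2) - c) (1 / 2 - c)).comp_sub_right c
  rw [Finset.sum_fn] at this
  exact this

lemma integrableOn_Icc_prod {ι : Type*} [Fintype ι] (S : Finset ι) {g : ℝ → ℝ} {a b : ℝ}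
    (hg : IntegrableOn g (Icc a b)) :
    IntegrableOn (fun ξ : ι → ℝ => ∏ j ∈ S, g (ξ j)) (Icc (fun _ => a) (fun _ => b)) := by
  classical
  have hint : Integrable fun ξ : ι → ℝ =>
      ∏ j, (Icc a b).indicator (fun t => if j ∈ S then g t else 1) (ξ j) := by
    refine Integrable.fintype_prod fun j => (integrable_indicator_iff measurableSet_Icc).2 ?_
    split_ifs
    · exact hg
    · exact integrableOn_const (by simp)
  refine hint.integrableOn.congr_fun (fun ξ hξ => ?_) measurableSet_Icc
  have hind : ∀ j, (Icc a b).indicator (fun t => if j ∈ S then g t else 1) (ξ j) =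
      if j ∈ S then g (ξ j) else 1 := fun j =>
    indicator_of_mem (s := Icc a b) ⟨hξ.1 j, hξ.2 j⟩ _
  simp only [hind, Finset.prod_ite_mem, Finset.univ_inter]

lemma ae_forall_apply_notMem {ι : Type*} [Fintype ι] (s : Finset ℝ) :
    ∀ᵐ ξ : ι → ℝ, ∀ j, ξ j ∉ s := by
  refine ae_all_iff.2 fun j => ?_
  have hne : ∀ c ∈ s, ∀ᵐ ξ : ι → ℝ, ξ j ≠ c := fun c _ =>
    measure_eq_zero_iff_ae_notMem.1 <| by
      rw [volume_pi]; exact Measure.pi_hyperplane (fun _ : ι => (volume : Measure ℝ)) j c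
  filter_upwards [(Filter.eventually_all_finset s).2 hne] with ξ hξ hmem using hξ _ hmem rfl

theorem statement13_general (d k : ℕ) (hd : 3 ≤ d) (hkd : k ≤ d - 1)
    (lam : ℝ) (hlam : lam = 4 * k)
    (f : (Fin d → ℝ) → ℂ) (hf : ContDiff ℝ 1 f)
    (hvanish : ∀ ξ, h0sym ξ = lam → f ξ = 0) :
    IntegrableOn (fun ξ => ‖f ξ‖ ^ 2 / (h0sym ξ - lam) ^ 2)
      (Set.Icc (fun _ : Fin d => -(1 / 2 : ℝ)) (fun _ => 1 / 2)) volume := by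
  subst hlam
  have hk : k ≤ d := hkd.trans (Nat.sub_le d 1)
  have : Nonempty (Fin d) := ⟨⟨0, by omega⟩⟩
  obtain ⟨L, hL⟩ := hf.contDiffOn.exists_lipschitzOnWith one_ne_zero (convex_Icc _ _) isCompact_Icc
  obtain ⟨S, -, hS⟩ := Finset.exists_subset_card_eq (s := (Finset.univ : Finset (Fin d))) (n := 3)
    (by simpa using hd)
  have hmeas : AEStronglyMeasurable (fun ξ => ‖f ξ‖ ^ 2 / (h0sym ξ - 4 * k) ^ 2)
      (volume.restrict (Icc (fun _ => -(1 / 2)) (fun _ => 1 / 2))) := by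
    have : Continuous (h0sym (d := d)) := by unfold h0sym; fun_prop
    exact ((hf.continuous.norm.pow 2).measurable.div
      ((this.sub continuous_const).pow 2).measurable).aestronglyMeasurable
  refine ((integrableOn_Icc_prod S integrableOn_critWeight).const_mul
    ((L * (d + 1) / 4) ^ 2)).mono' hmeas ?_
  filter_upwards [ae_restrict_mem measurableSet_Icc,
    ae_restrict_of_ae (ae_forall_apply_notMem sinSqCrit)] with ξ hξ hcrit
  rw [mem_Icc_const_iff_abs_le] at hξ
  obtain ⟨i, hi⟩ := Finite.exists_max fun j => minSinCosSq (ξ j)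
  rw [norm_of_nonneg (by positivity)]
  calc ‖f ξ‖ ^ 2 / (h0sym ξ - 4 * k) ^ 2 ≤ (L * (d + 1) / 4) ^ 2 / minSinCosSq (ξ i) :=
        norm_sq_div_sq_le hk hL hvanish hξ hi (minSinCosSq_pos (hξ i) (hcrit i))
    _ ≤ (L * (d + 1) / 4) ^ 2 * ∏ j ∈ S, critWeight (ξ j) := by
        rw [div_eq_mul_inv]
        gcongr
        exact inv_le_prod_critWeight hS hξ hcrit hi

theorem statement13 (d k : ℕ) (hd : 3 ≤ d) (hk1 : 1 ≤ k) (hkd : k ≤ d - 1)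
    (lam : ℝ) (hlam : lam = 4 * k)
    (f : (Fin d → ℝ) → ℂ) (hf : ContDiff ℝ 1 f)
    (hper : ∀ (ξ : Fin d → ℝ) (n : Fin d → ℤ), f (ξ + fun j => (n j : ℝ)) = f ξ)
    (hvanish : ∀ ξ, h0sym ξ = lam → f ξ = 0) :
    IntegrableOn (fun ξ => ‖f ξ‖ ^ 2 / (h0sym ξ - lam) ^ 2)
      (Set.Icc (fun _ : Fin d => -(1 / 2 : ℝ)) (fun _ => 1 / 2)) volume :=
  statement13_general d k hd hkd lam hlam f hf hvanish
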